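/- arXiv:1411.2071 — 2 statements merged into one kernel-verified Lean document; each statement's English description precedes it below -/
import Mathlib

section
/- Let p be a prime with p ≠ 11, and let E be the elliptic curve y² + y = x³ − x² − 10x − 20 over F_p (the curve X₀(11), which is nonsingular for p ≠ 11 since its discriminant is −11⁵). Then 5 divides #E(F_p) = 1 + #{(x,y) ∈ F_p × F_p : y² + y = x³ − x² − 10x − 20}. -/
/-!
The point `P = (5, 5)` of `X₀(11)` has order 5 over every field in which `11 ≠ 0`: doubling gives
`2P = (16, -61)` and doubling again gives `4P = (5, -6) = -P`. Hence 5 divides the order of the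
finite group `X₀(11)(𝔽_p)`, whose elements are the point at infinity and the affine solutions.
-/

open WeierstrassCurve WeierstrassCurve.Affine WeierstrassCurve.Affine.Point

namespace WeierstrassCurve.Affine

lemma natCard_point {R : Type*} [CommRing R] [Nontrivial R] [Finite R] (W : Affine R)
    [W.IsElliptic] : Nat.card W.Point = 1 + Nat.card {xy : R × R // W.Equation xy.1 xy.2} := by
  rw [Nat.card_congr W.pointEquiv, WithZero, Finite.card_option, add_comm]

lemma Point.some_add_self_eq_some {F : Type*} [Field F] [DecidableEq F] {W : Affine F}
    {x y x' y' ℓ : F} {h : W.Nonsingular x y} {h' : W.Nonsingular x' y'} (hy : y ≠ W.negY x y)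
    (hℓ : ℓ * (y - W.negY x y) = 3 * x ^ 2 + 2 * W.a₂ * x + W.a₄ - W.a₁ * y)
    (hx' : W.addX x x ℓ = x') (hy' : W.addY x x y ℓ = y') :
    some x y h + some x y h = some x' y' h' := by
  have hslope : W.slope x x y y = ℓ := by
    rw [slope_of_Y_ne rfl hy, div_eq_iff (sub_ne_zero.mpr hy), hℓ]
  rw [add_self_of_Y_ne hy, some.injEq, hslope]
  exact ⟨hx', hy'⟩

end WeierstrassCurve.Affine

@[simps]
def X₀11 (R : Type*) [CommRing R] : WeierstrassCurve R :=
  { a₁ := 0, a₂ := -1, a₃ := 1, a₄ := -10, a₆ := -20 }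

namespace X₀11

lemma equation_iff {R : Type*} [CommRing R] (x y : R) :
    (X₀11 R).toAffine.Equation x y ↔ y ^ 2 + y = x ^ 3 - x ^ 2 - 10 * x - 20 := by
  rw [Affine.equation_iff]
  simp only [X₀11_a₁, X₀11_a₂, X₀11_a₃, X₀11_a₄, X₀11_a₆]
  constructor <;> intro h <;> linear_combination h

lemma Δ_eq {R : Type*} [CommRing R] : (X₀11 R).Δ = -11 ^ 5 := by
  simp only [Δ, b₂, b₄, b₆, b₈, X₀11_a₁, X₀11_a₂, X₀11_a₃, X₀11_a₄, X₀11_a₆]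
  ring

lemma isElliptic_iff {F : Type*} [Field F] : (X₀11 F).IsElliptic ↔ (11 : F) ≠ 0 := by
  rw [WeierstrassCurve.isElliptic_iff, Δ_eq, isUnit_iff_ne_zero, neg_ne_zero,
    pow_ne_zero_iff (by norm_num)]

section Torsion

variable (F : Type*) [Field F] [(X₀11 F).IsElliptic]

lemma nonsingular_of_equation {x y : F} (h : y ^ 2 + y = x ^ 3 - x ^ 2 - 10 * x - 20) :
    (X₀11 F).toAffine.Nonsingular x y :=
  equation_iff_nonsingular.mp ((equation_iff x y).mpr h)

def P : (X₀11 F).toAffine.Point := some 5 5 (nonsingular_of_equation F (by norm_num))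

def twoP : (X₀11 F).toAffine.Point := some 16 (-61) (nonsingular_of_equation F (by norm_num))

variable [DecidableEq F]

lemma P_add_P : P F + P F = twoP F := by
  have h11 : (11 : F) ≠ 0 := isElliptic_iff.mp ‹_›
  apply some_add_self_eq_some (ℓ := 5)
  · simp only [negY, X₀11_a₁, X₀11_a₃]
    intro h
    exact h11 (by linear_combination h)
  all_goals simp only [negY, addY, negAddY, addX, X₀11_a₁, X₀11_a₂, X₀11_a₃, X₀11_a₄]; ring

lemma twoP_add_twoP : twoP F + twoP F = -P F := by
  have h11 : (11 : F) ≠ 0 := isElliptic_iff.mp ‹_›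
  rw [P, neg_some]
  apply some_add_self_eq_some (ℓ := -6)
  · simp only [negY, X₀11_a₁, X₀11_a₃]
    intro h
    exact h11 (mul_self_eq_zero.mp (by linear_combination -h))
  all_goals simp only [negY, addY, negAddY, addX, X₀11_a₁, X₀11_a₂, X₀11_a₃, X₀11_a₄]; ring

lemma addOrderOf_P : addOrderOf (P F) = 5 := by
  have : Fact (Nat.Prime 5) := ⟨Nat.prime_five⟩
  refine addOrderOf_eq_prime ?_ (some_ne_zero _)
  calc 5 • P F = (P F + P F) + (P F + P F) + P F := by abel
    _ = 0 := by rw [P_add_P, twoP_add_twoP, neg_add_cancel]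

lemma five_dvd_natCard_point [Finite F] : 5 ∣ Nat.card (X₀11 F).toAffine.Point :=
  addOrderOf_P F ▸ addOrderOf_dvd_natCard (P F)

end Torsion

end X₀11

/-- For every prime `p ≠ 11`, the elliptic curve
`X₀(11) : y² + y = x³ - x² - 10x - 20` over `F_p` satisfies `5 ∣ #E(F_p)`,
where `#E(F_p)` is `1` plus the number of affine solutions. -/
theorem stmt10 (p : ℕ) [Fact p.Prime] (hp : p ≠ 11) :
    5 ∣ (1 + Nat.card {pt : ZMod p × ZMod p //
      pt.2 ^ 2 + pt.2 = pt.1 ^ 3 - pt.1 ^ 2 - 10 * pt.1 - 20}) := by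
  have h11 : (11 : ZMod p) ≠ 0 := by
    intro h
    rw [show (11 : ZMod p) = ((11 : ℕ) : ZMod p) by norm_num, ZMod.natCast_eq_zero_iff] at h
    exact hp ((Nat.prime_dvd_prime_iff_eq Fact.out (by norm_num)).mp h)
  have : (X₀11 (ZMod p)).IsElliptic := X₀11.isElliptic_iff.mpr h11
  have hcard := (X₀11 (ZMod p)).toAffine.natCard_point
  simp only [X₀11.equation_iff] at hcard
  exact hcard ▸ X₀11.five_dvd_natCard_point (ZMod p)
end

section
/- Let (D,q) be a good pair and let t ≤ t′ be real numbers. If every complex zero of x ↦ Ξ_t(x, χ_D) is real, then every complex zero of x ↦ Ξ_{t′}(x, χ_D) is real. (Consequently there is a well-defined De Bruijn–Newman constant Λ_D ∈ [−∞, ∞) such that Ξ_t has only real zeros precisely when t ≥ Λ_D.) -/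
open Polynomial

noncomputable section

variable {F : Type} [Field F] [Fintype F]

/-- Kronecker symbol of `D` at a monic irreducible `g`:
`0` if `g ∣ D`, `1` if `D` is a nonzero square mod `g`, `-1` otherwise. -/
def kron (D g : F[X]) : ℤ := by
  classical exact
    if g ∣ D then 0 else if ∃ h : F[X], g ∣ (h ^ 2 - D) then 1 else -1

/-- `χ_D(f)`: the Kronecker symbol extended multiplicatively over the monic
irreducible factors of `f`, counted with multiplicity; `χ_D(1) = 1`.
(Each irreducible factor is rescaled to be monic.) -/
def chi (D f : F[X]) : ℤ :=
  ((UniqueFactorizationMonoid.factors f).map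
    (fun g => kron D (C (g.leadingCoeff)⁻¹ * g))).prod

/-- `c_n(D) = Σ_{f monic, deg f = n} χ_D(f)`; monic polynomials of degree `n`
are parametrized by their lower-order coefficients. -/
def lCoeff (D : F[X]) (n : ℕ) : ℤ :=
  ∑ v : Fin n → F, chi D (X ^ n + ∑ i : Fin n, C (v i) * X ^ (i : ℕ))

/-- The deformed `L`-function `Ξ_t(x, χ_D)`, with `g = (deg D - 1)/2`. -/
def Xi (D : F[X]) (t : ℝ) (x : ℂ) : ℂ :=
  (lCoeff D ((D.natDegree - 1) / 2) : ℂ) +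
    ∑ n ∈ Finset.Icc 1 ((D.natDegree - 1) / 2),
      (lCoeff D ((D.natDegree - 1) / 2 - n) : ℂ) *
        ((Real.sqrt (Fintype.card F) ^ n * Real.exp (t * n ^ 2) : ℝ) : ℂ) *
        (Complex.exp (n * Complex.I * x) + Complex.exp (-(n * Complex.I * x)))

/-- `(D, q)` is a good pair: `q` odd, `D` monic, squarefree, of odd degree `≥ 3`. -/
def GoodPair (D : F[X]) : Prop :=
  Odd (Fintype.card F) ∧ D.Monic ∧ Squarefree D ∧ Odd D.natDegree ∧ 3 ≤ D.natDegree

end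

/-!
Put `z = e^{ix}`. Then `e^{igx} Ξ_t(x) = P_t(z)` for the palindromic polynomial `P_t` of degree
`2g` whose coefficients of `z^{g+n}` and `z^{g-n}` are `c_{g-n}(D) q^{n/2} e^{tn²}`, and the real
zeros of `Ξ_t` are the zeros of `P_t` on the unit circle (`P_t(0) ≠ 0` since `c_0(D) = 1`).

Multiplying the coefficients of `z^{g±n}` of such a `P` by `cosh (n a)` produces
`(r^g P(z/r) + r^{-g} P(rz)) / 2` with `r = e^a > 1`. If the roots `ζ` of `P` lie on the circle,
then `|rz - ζ| < |z - rζ|` for `|z| < 1` and the reverse for `|z| > 1`, so the two terms have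
different norms off the circle and cannot cancel. Since `cosh (n √(2s/m)) ^ m → e^{sn²}`,
`P_{t+s}` is the limit of polynomials with all roots on the circle and leading coefficient
at least that of `P_t`; off the circle these are bounded away from `0` by
`|lc| · |‖z‖ - 1|^{2g}`, so the limit has no zeros there either (de Bruijn's argument).
-/

open Filter Topology

namespace Multiset

lemma prod_map_lt_prod_map_of_nonneg {R ι : Type*} [CommSemiring R] [LinearOrder R]
    [IsStrictOrderedRing R] {s : Multiset ι} (hs : s ≠ 0) {f g : ι → R}
    (h0 : ∀ i ∈ s, 0 ≤ f i) (hlt : ∀ i ∈ s, f i < g i) :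
    (s.map f).prod < (s.map g).prod := by
  induction s using Multiset.induction with
  | empty => exact absurd rfl hs
  | cons a s ih =>
    have h0' i (hi : i ∈ s) := h0 i (mem_cons_of_mem hi)
    rcases eq_or_ne s 0 with rfl | hs0
    · simpa using hlt a (mem_cons_self a 0)
    · simp only [map_cons, prod_cons]
      exact mul_lt_mul'' (hlt a (mem_cons_self a s))
        (ih hs0 h0' fun i hi => hlt i (mem_cons_of_mem hi)) (h0 a (mem_cons_self a s))
        (prod_map_nonneg h0')

lemma pow_card_le_prod_map {R ι : Type*} [CommSemiring R] [PartialOrder R]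
    [IsOrderedRing R] {s : Multiset ι} {f : ι → R} {δ : R} (hδ : 0 ≤ δ)
    (hle : ∀ i ∈ s, δ ≤ f i) : δ ^ card s ≤ (s.map f).prod := by
  simpa using prod_map_le_prod_map₀ (fun _ => δ) f (fun _ _ => hδ) hle

end Multiset

lemma Complex.norm_sub_mul_sq_sub_norm_mul_sub_sq {z ζ : ℂ} (hζ : ‖ζ‖ = 1) (r : ℝ) :
    ‖z - r * ζ‖ ^ 2 - ‖r * z - ζ‖ ^ 2 = (‖z‖ ^ 2 - 1) * (1 - r ^ 2) := by
  have hζ' : ζ.re ^ 2 + ζ.im ^ 2 = 1 := by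
    have := Complex.sq_norm ζ
    rw [hζ, Complex.normSq_apply] at this
    linarith
  simp only [Complex.sq_norm, Complex.normSq_apply, Complex.sub_re, Complex.sub_im,
    Complex.mul_re, Complex.mul_im, Complex.ofReal_re, Complex.ofReal_im]
  linear_combination (r ^ 2 - 1) * hζ'

lemma Complex.norm_mul_sub_lt_norm_sub_mul {z ζ : ℂ} (hζ : ‖ζ‖ = 1) {r : ℝ} (hr : 1 < r)
    (hz : ‖z‖ < 1) : ‖r * z - ζ‖ < ‖z - r * ζ‖ := by
  have hid := norm_sub_mul_sq_sub_norm_mul_sub_sq (z := z) hζ r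
  have hpos : 0 < (1 - ‖z‖ ^ 2) * (r ^ 2 - 1) :=
    mul_pos (by nlinarith [norm_nonneg z]) (by nlinarith)
  exact (pow_lt_pow_iff_left₀ (norm_nonneg _) (norm_nonneg _) two_ne_zero).1 (by linarith)

lemma Complex.norm_sub_mul_lt_norm_mul_sub {z ζ : ℂ} (hζ : ‖ζ‖ = 1) {r : ℝ} (hr : 1 < r)
    (hz : 1 < ‖z‖) : ‖z - r * ζ‖ < ‖r * z - ζ‖ := by
  have hid := norm_sub_mul_sq_sub_norm_mul_sub_sq (z := z) hζ r
  have hpos : 0 < (‖z‖ ^ 2 - 1) * (r ^ 2 - 1) := mul_pos (by nlinarith) (by nlinarith)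
  exact (pow_lt_pow_iff_left₀ (norm_nonneg _) (norm_nonneg _) two_ne_zero).1 (by linarith)

lemma Real.one_add_sq_div_two_le_cosh (x : ℝ) : 1 + x ^ 2 / 2 ≤ cosh x := by
  have h := sum_le_hasSum (Finset.range 2)
    (fun i _ => div_nonneg ((even_two_mul i).pow_nonneg x) (Nat.cast_nonneg _)) (hasSum_cosh x)
  simpa [Finset.sum_range_succ] using h

lemma Real.tendsto_cosh_mul_sqrt_div_pow (x : ℝ) {s : ℝ} (hs : 0 ≤ s) :
    Tendsto (fun m : ℕ => cosh (x * √(2 * s / m)) ^ m) atTop (𝓝 (exp (s * x ^ 2))) := by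
  have half_sq {m : ℕ} (hm : 1 ≤ m) : (x * √(2 * s / m)) ^ 2 / 2 = s * x ^ 2 / m := by
    rw [mul_pow, Real.sq_sqrt (by positivity)]
    ring
  refine tendsto_of_tendsto_of_tendsto_of_le_of_le' (tendsto_one_add_div_pow_exp _)
    tendsto_const_nhds (eventually_atTop.2 ⟨1, fun m hm => ?_⟩)
    (eventually_atTop.2 ⟨1, fun m hm => ?_⟩)
  · refine pow_le_pow_left₀ (by positivity) ?_ m
    exact half_sq hm ▸ one_add_sq_div_two_le_cosh _
  · calc cosh (x * √(2 * s / m)) ^ m ≤ exp ((x * √(2 * s / m)) ^ 2 / 2) ^ m := by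
          exact pow_le_pow_left₀ (cosh_pos _).le (cosh_le_exp_half_sq _) m
      _ = exp (s * x ^ 2) := by
          rw [← exp_nat_mul, half_sq hm]
          field_simp

def RootsOnUnitCircle (p : ℂ[X]) : Prop := ∀ z : ℂ, p.eval z = 0 → ‖z‖ = 1

lemma Polynomial.norm_eval_eq_norm_leadingCoeff_mul_prod_roots (p : ℂ[X]) (z : ℂ) :
    ‖p.eval z‖ = ‖p.leadingCoeff‖ * (p.roots.map fun ζ => ‖z - ζ‖).prod := by
  rw [(IsAlgClosed.splits p).eval_eq_prod_roots, norm_mul, ← normHom_apply (Multiset.prod _),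
    map_multiset_prod, Multiset.map_map]
  rfl

lemma RootsOnUnitCircle.norm_leadingCoeff_mul_le_norm_eval {p : ℂ[X]} (hp : RootsOnUnitCircle p)
    (hp0 : p ≠ 0) (z : ℂ) : ‖p.leadingCoeff‖ * |‖z‖ - 1| ^ p.natDegree ≤ ‖p.eval z‖ := by
  rw [norm_eval_eq_norm_leadingCoeff_mul_prod_roots, ← IsAlgClosed.card_roots_eq_natDegree]
  refine mul_le_mul_of_nonneg_left (Multiset.pow_card_le_prod_map (abs_nonneg _)
    fun ζ hζ => ?_) (norm_nonneg _)
  rw [← hp ζ ((mem_roots hp0).1 hζ)]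
  exact abs_norm_sub_norm_le z ζ

lemma Real.two_mul_cosh_dist_mul (k g : ℕ) (a : ℝ) :
    2 * cosh (Nat.dist k g * a) = exp a ^ g * (exp a)⁻¹ ^ k + (exp a ^ g)⁻¹ * exp a ^ k := by
  have hcosh : cosh (Nat.dist k g * a) = cosh ((k - g) * a) := by
    rcases le_total k g with h | h
    · rw [Nat.dist_eq_sub_of_le h, Nat.cast_sub h, ← cosh_neg]
      ring_nf
    · rw [Nat.dist_eq_sub_of_le_right h, Nat.cast_sub h]
  rw [hcosh, cosh_eq, sub_mul, neg_sub, exp_sub, exp_sub, exp_nat_mul, exp_nat_mul, inv_pow]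
  field_simp
  ring

lemma Polynomial.pow_natDegree_mul_norm_eval_inv_mul (p : ℂ[X]) {r : ℝ} (hr : 0 < r) (z : ℂ) :
    r ^ p.natDegree * ‖p.eval ((r : ℂ)⁻¹ * z)‖
      = ‖p.leadingCoeff‖ * (p.roots.map fun ζ => ‖z - r * ζ‖).prod := by
  have hfactor (ζ : ℂ) : ‖z - r * ζ‖ = r * ‖(r : ℂ)⁻¹ * z - ζ‖ := by
    have hr' : (r : ℂ) ≠ 0 := by exact_mod_cast hr.ne'
    rw [show (r : ℂ)⁻¹ * z - ζ = (r : ℂ)⁻¹ * (z - r * ζ) by field_simp, norm_mul, norm_inv,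
      Complex.norm_real, Real.norm_of_nonneg hr.le, mul_inv_cancel_left₀ hr.ne']
  simp_rw [hfactor, Multiset.prod_map_mul, Multiset.map_const', Multiset.prod_replicate,
    IsAlgClosed.card_roots_eq_natDegree, norm_eval_eq_norm_leadingCoeff_mul_prod_roots]
  ring

noncomputable def palindromicPoly (g : ℕ) (w : ℕ → ℂ) : ℂ[X] :=
  ∑ k ∈ Finset.range (2 * g + 1), C (w (Nat.dist k g)) * X ^ k

section palindromicPoly

variable {g : ℕ} {w : ℕ → ℂ}

@[simp]
lemma eval_palindromicPoly (z : ℂ) :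
    (palindromicPoly g w).eval z = ∑ k ∈ Finset.range (2 * g + 1), w (Nat.dist k g) * z ^ k := by
  simp [palindromicPoly, eval_finsetSum]

lemma coeff_palindromicPoly (k : ℕ) :
    (palindromicPoly g w).coeff k = if k < 2 * g + 1 then w (Nat.dist k g) else 0 := by
  simp [palindromicPoly, coeff_X_pow]

lemma natDegree_palindromicPoly (hw : w g ≠ 0) : (palindromicPoly g w).natDegree = 2 * g := by
  refine natDegree_eq_of_le_of_coeff_ne_zero ?_ ?_
  · refine natDegree_sum_le_of_forall_le _ _ fun k hk => (natDegree_C_mul_X_pow_le _ _).trans ?_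
    exact Nat.lt_succ_iff.1 (Finset.mem_range.1 hk)
  · rwa [coeff_palindromicPoly, if_pos (by omega), show Nat.dist (2 * g) g = g by
      simp [Nat.dist]; omega]

lemma leadingCoeff_palindromicPoly (hw : w g ≠ 0) : (palindromicPoly g w).leadingCoeff = w g := by
  rw [leadingCoeff, natDegree_palindromicPoly hw, coeff_palindromicPoly, if_pos (by omega),
    show Nat.dist (2 * g) g = g by simp [Nat.dist]; omega]

lemma palindromicPoly_ne_zero (hw : w g ≠ 0) : palindromicPoly g w ≠ 0 := by
  rw [← leadingCoeff_ne_zero, leadingCoeff_palindromicPoly hw]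
  exact hw

lemma eval_zero_palindromicPoly : (palindromicPoly g w).eval 0 = w g := by
  rw [← coeff_zero_eq_eval_zero, coeff_palindromicPoly, if_pos (by omega), Nat.dist_zero_left]

lemma tendsto_eval_palindromicPoly {ι : Type*} {l : Filter ι} {ws : ι → ℕ → ℂ} {w₀ : ℕ → ℂ}
    (h : ∀ n, Tendsto (fun i => ws i n) l (𝓝 (w₀ n))) (z : ℂ) :
    Tendsto (fun i => (palindromicPoly g (ws i)).eval z) l (𝓝 ((palindromicPoly g w₀).eval z)) := by
  simp only [eval_palindromicPoly]
  exact tendsto_finsetSum _ fun k _ => (h _).mul_const _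

lemma two_mul_eval_palindromicPoly_mul_cosh (a : ℝ) (z : ℂ) :
    2 * (palindromicPoly g fun n => w n * Real.cosh (n * a)).eval z
      = (Real.exp a : ℂ) ^ g * (palindromicPoly g w).eval ((Real.exp a : ℂ)⁻¹ * z)
        + ((Real.exp a : ℂ) ^ g)⁻¹ * (palindromicPoly g w).eval (Real.exp a * z) := by
  simp only [eval_palindromicPoly, Finset.mul_sum, ← Finset.sum_add_distrib]
  refine Finset.sum_congr rfl fun k _ => ?_
  have := congrArg (fun r : ℝ => (r : ℂ)) (Real.two_mul_cosh_dist_mul k g a)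
  push_cast at this ⊢
  linear_combination (w (Nat.dist k g) * z ^ k) * this

lemma prod_roots_norm_sub_exp_mul_eq (hw : w g ≠ 0) {a : ℝ} {z : ℂ}
    (hz : (palindromicPoly g fun n => w n * Real.cosh (n * a)).eval z = 0) :
    ((palindromicPoly g w).roots.map fun ζ => ‖z - Real.exp a * ζ‖).prod
      = ((palindromicPoly g w).roots.map fun ζ => ‖Real.exp a * z - ζ‖).prod := by
  set P := palindromicPoly g w
  have hnorms : Real.exp a ^ (2 * g) * ‖P.eval ((Real.exp a : ℂ)⁻¹ * z)‖
      = ‖P.eval (Real.exp a * z)‖ := by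
    have hsum := two_mul_eval_palindromicPoly_mul_cosh (g := g) (w := w) a z
    rw [hz, mul_zero, eq_comm, add_eq_zero_iff_eq_neg] at hsum
    have := congrArg norm hsum
    rw [norm_mul, norm_neg, norm_mul, norm_inv, norm_pow, Complex.norm_real,
      Real.norm_of_nonneg (Real.exp_pos a).le] at this
    rw [pow_mul', sq, mul_assoc, this, mul_inv_cancel_left₀ (by positivity)]
  have hlc : ‖P.leadingCoeff‖ ≠ 0 :=
    norm_ne_zero_iff.2 (leadingCoeff_ne_zero.2 (palindromicPoly_ne_zero hw))
  refine mul_left_cancel₀ hlc ?_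
  rw [← pow_natDegree_mul_norm_eval_inv_mul P (Real.exp_pos a), natDegree_palindromicPoly hw,
    hnorms, norm_eval_eq_norm_leadingCoeff_mul_prod_roots]

end palindromicPoly

namespace RootsOnUnitCircle

variable {g : ℕ} {w : ℕ → ℂ}

lemma palindromicPoly_mul_cosh (hw : w g ≠ 0) (h : RootsOnUnitCircle (palindromicPoly g w))
    (a : ℝ) : RootsOnUnitCircle (palindromicPoly g fun n => w n * Real.cosh (n * a)) := by
  wlog ha : 0 < a generalizing a
  · rcases lt_trichotomy a 0 with hneg | rfl | hpos
    · simpa [Real.cosh_neg] using this (-a) (neg_pos.2 hneg)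
    · simpa using h
    · exact absurd hpos ha
  obtain rfl | hg := Nat.eq_zero_or_pos g
  · intro z hz
    simp [hw] at hz
  intro z hz
  by_contra hz1
  set P := palindromicPoly g w
  have hr : 1 < Real.exp a := Real.one_lt_exp_iff.2 ha
  have hP : P ≠ 0 := palindromicPoly_ne_zero hw
  have hcircle ζ (hζ : ζ ∈ P.roots) : ‖ζ‖ = 1 := h ζ ((mem_roots hP).1 hζ)
  have hbalance := prod_roots_norm_sub_exp_mul_eq hw hz
  have hroots : P.roots ≠ 0 := by
    rw [← Multiset.card_pos, IsAlgClosed.card_roots_eq_natDegree, natDegree_palindromicPoly hw]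
    omega
  rcases lt_or_gt_of_ne hz1 with hz1 | hz1
  · exact (Multiset.prod_map_lt_prod_map_of_nonneg hroots (fun _ _ => norm_nonneg _)
      fun ζ hζ => Complex.norm_mul_sub_lt_norm_sub_mul (hcircle ζ hζ) hr hz1).ne' hbalance
  · exact (Multiset.prod_map_lt_prod_map_of_nonneg hroots (fun _ _ => norm_nonneg _)
      fun ζ hζ => Complex.norm_sub_mul_lt_norm_mul_sub (hcircle ζ hζ) hr hz1).ne hbalance

lemma palindromicPoly_mul_cosh_pow (hw : w g ≠ 0) (h : RootsOnUnitCircle (palindromicPoly g w))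
    (a : ℝ) (m : ℕ) :
    RootsOnUnitCircle (palindromicPoly g fun n => w n * (Real.cosh (n * a) ^ m : ℝ)) := by
  induction m with
  | zero => simpa using h
  | succ m ih =>
    have hw' : w g * (Real.cosh (g * a) ^ m : ℝ) ≠ 0 :=
      mul_ne_zero hw (by exact_mod_cast (pow_pos (Real.cosh_pos _) m).ne')
    simpa [pow_succ, mul_assoc] using ih.palindromicPoly_mul_cosh hw' a

lemma palindromicPoly_mul_exp_sq (hw : w g ≠ 0)
    (h : RootsOnUnitCircle (palindromicPoly g w)) {s : ℝ} (hs : 0 ≤ s) :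
    RootsOnUnitCircle (palindromicPoly g fun n => w n * Real.exp (s * n ^ 2)) := by
  intro z hz
  by_contra hz1
  set wm : ℕ → ℕ → ℂ := fun m n => w n * (Real.cosh (n * √(2 * s / m)) ^ m : ℝ)
  have hwm m : wm m g ≠ 0 :=
    mul_ne_zero hw (by exact_mod_cast (pow_pos (Real.cosh_pos _) m).ne')
  have hlower m : ‖w g‖ * |‖z‖ - 1| ^ (2 * g) ≤ ‖(palindromicPoly g (wm m)).eval z‖ := by
    have := (h.palindromicPoly_mul_cosh_pow hw _ m).norm_leadingCoeff_mul_le_norm_eval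
      (palindromicPoly_ne_zero (hwm m)) z
    rw [leadingCoeff_palindromicPoly (hwm m), natDegree_palindromicPoly (hwm m)] at this
    refine le_trans (mul_le_mul_of_nonneg_right ?_ (by positivity)) this
    rw [norm_mul, Complex.norm_real, Real.norm_of_nonneg (pow_pos (Real.cosh_pos _) m).le]
    exact le_mul_of_one_le_right (norm_nonneg _) (one_le_pow₀ (Real.one_le_cosh _))
  have htendsto : Tendsto (fun m => (palindromicPoly g (wm m)).eval z) atTop (𝓝 0) :=
    hz ▸ tendsto_eval_palindromicPoly (fun n =>
      ((Real.tendsto_cosh_mul_sqrt_div_pow n hs).ofReal).const_mul (w n)) z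
  have hpos : 0 < ‖w g‖ * |‖z‖ - 1| ^ (2 * g) := by
    have : |‖z‖ - 1| ≠ 0 := abs_ne_zero.2 (sub_ne_zero.2 hz1)
    positivity
  obtain ⟨m, hm⟩ := (htendsto.norm.eventually_lt_const (by simpa using hpos)).exists
  exact (hlower m).not_gt hm

end RootsOnUnitCircle

lemma rootsOnUnitCircle_iff_forall_eval_exp {p : ℂ[X]} (hp : p.eval 0 ≠ 0) :
    RootsOnUnitCircle p ↔ ∀ x : ℂ, p.eval (Complex.exp (Complex.I * x)) = 0 → x.im = 0 := by
  refine ⟨fun h x hx => ?_, fun h z hz => ?_⟩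
  · simpa [Complex.norm_exp] using h _ hx
  · have hz0 : z ≠ 0 := by
      rintro rfl
      exact hp hz
    have hexp : Complex.exp (Complex.I * (-Complex.I * Complex.log z)) = z := by
      rw [← mul_assoc, mul_neg, Complex.I_mul_I, neg_neg, one_mul, Complex.exp_log hz0]
    have him := h _ (hexp ▸ hz)
    simp only [neg_mul, Complex.neg_im, Complex.mul_im, Complex.I_re, Complex.I_im,
      Complex.log_re, Complex.log_im, zero_mul, one_mul, zero_add, neg_eq_zero,
      Real.log_eq_zero, norm_eq_zero] at him
    rcases him with h0 | h1 | hneg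
    · exact absurd h0 hz0
    · exact h1
    · linarith [norm_nonneg z]

lemma Finset.sum_range_two_mul_add_one {M : Type*} [AddCommMonoid M] (g : ℕ) (f : ℕ → M) :
    ∑ k ∈ range (2 * g + 1), f k = f g + ∑ n ∈ Icc 1 g, (f (g + n) + f (g - n)) := by
  rw [show 2 * g + 1 = g + (g + 1) by ring, sum_range_add, sum_range_succ', ← sum_range_reflect,
    ← Ico_add_one_right_eq_Icc, sum_Ico_eq_sum_range, sum_add_distrib, add_tsub_cancel_right]
  have hlow : ∑ j ∈ range g, f (g - 1 - j) = ∑ j ∈ range g, f (g - (1 + j)) :=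
    sum_congr rfl fun j _ => congrArg f (by omega)
  have hhigh : ∑ j ∈ range g, f (g + (j + 1)) = ∑ j ∈ range g, f (g + (1 + j)) :=
    sum_congr rfl fun j _ => by rw [add_comm j]
  rw [hlow, hhigh, add_zero]
  abel

lemma eval_exp_palindromicPoly (g : ℕ) (w : ℕ → ℂ) (x : ℂ) :
    (palindromicPoly g w).eval (Complex.exp (Complex.I * x))
      = Complex.exp (g * Complex.I * x) * (w 0 + ∑ n ∈ Finset.Icc 1 g,
          w n * (Complex.exp (n * Complex.I * x) + Complex.exp (-(n * Complex.I * x)))) := by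
  rw [eval_palindromicPoly, Finset.sum_range_two_mul_add_one, mul_add, Finset.mul_sum]
  congr 1
  · simp [← Complex.exp_nat_mul, mul_comm, ← mul_assoc]
  refine Finset.sum_congr rfl fun n hn => ?_
  obtain ⟨-, hng⟩ := Finset.mem_Icc.1 hn
  rw [show Nat.dist (g + n) g = n by simp [Nat.dist], show Nat.dist (g - n) g = n by
    simp [Nat.dist]; omega, ← Complex.exp_nat_mul, ← Complex.exp_nat_mul]
  have hplus : Complex.exp ((g + n : ℕ) * (Complex.I * x))
      = Complex.exp (g * Complex.I * x) * Complex.exp (n * Complex.I * x) := by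
    rw [← Complex.exp_add]
    push_cast
    ring_nf
  have hminus : Complex.exp ((g - n : ℕ) * (Complex.I * x))
      = Complex.exp (g * Complex.I * x) * Complex.exp (-(n * Complex.I * x)) := by
    rw [← Complex.exp_add, Nat.cast_sub hng]
    ring_nf
  rw [hplus, hminus]
  ring

section Xi

variable {F : Type} [Field F] [Fintype F]

lemma lCoeff_zero (D : F[X]) : lCoeff D 0 = 1 := by
  simp [lCoeff, chi]

noncomputable def xiWeight (D : F[X]) (s : ℝ) (n : ℕ) : ℂ :=
  lCoeff D ((D.natDegree - 1) / 2 - n) * (√(Fintype.card F) ^ n * Real.exp (s * n ^ 2) : ℝ)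

noncomputable def xiPoly (D : F[X]) (s : ℝ) : ℂ[X] :=
  palindromicPoly ((D.natDegree - 1) / 2) (xiWeight D s)

lemma xiWeight_add (D : F[X]) (t s : ℝ) (n : ℕ) :
    xiWeight D (t + s) n = xiWeight D t n * Real.exp (s * n ^ 2) := by
  simp only [xiWeight, add_mul, Real.exp_add]
  push_cast
  ring

lemma xiWeight_ne_zero (D : F[X]) (s : ℝ) : xiWeight D s ((D.natDegree - 1) / 2) ≠ 0 := by
  rw [xiWeight, Nat.sub_self, lCoeff_zero, Int.cast_one, one_mul, Complex.ofReal_ne_zero]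
  have : 0 < √(Fintype.card F) := Real.sqrt_pos.2 (by exact_mod_cast Fintype.card_pos)
  positivity

lemma exp_mul_Xi (D : F[X]) (s : ℝ) (x : ℂ) :
    Complex.exp (((D.natDegree - 1) / 2 : ℕ) * Complex.I * x) * Xi D s x
      = (xiPoly D s).eval (Complex.exp (Complex.I * x)) := by
  rw [xiPoly, eval_exp_palindromicPoly, Xi]
  simp [xiWeight, mul_assoc]

lemma forall_Xi_eq_zero_im_eq_zero_iff (D : F[X]) (s : ℝ) :
    (∀ x : ℂ, Xi D s x = 0 → x.im = 0) ↔ RootsOnUnitCircle (xiPoly D s) := by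
  rw [rootsOnUnitCircle_iff_forall_eval_exp (by
    rw [xiPoly, eval_zero_palindromicPoly]; exact xiWeight_ne_zero D s)]
  simp only [← exp_mul_Xi, mul_eq_zero, Complex.exp_ne_zero, false_or]

end Xi

theorem stmt16_general (F : Type) [Field F] [Fintype F] (D : F[X])
    (t t' : ℝ) (htt' : t ≤ t')
    (h : ∀ x : ℂ, Xi D t x = 0 → x.im = 0) :
    ∀ x : ℂ, Xi D t' x = 0 → x.im = 0 := by
  rw [forall_Xi_eq_zero_im_eq_zero_iff] at h ⊢
  have hflow := h.palindromicPoly_mul_exp_sq (xiWeight_ne_zero D t) (sub_nonneg.2 htt')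
  simpa only [xiPoly, ← xiWeight_add, add_sub_cancel] using hflow

/-- For a good pair `(D, q)` and reals `t ≤ t′`: if every zero of
`Ξ_t(·, χ_D)` is real, then every zero of `Ξ_{t′}(·, χ_D)` is real. -/
theorem stmt16 (F : Type) [Field F] [Fintype F] (D : F[X]) (hD : GoodPair D)
    (t t' : ℝ) (htt' : t ≤ t')
    (h : ∀ x : ℂ, Xi D t x = 0 → x.im = 0) :
    ∀ x : ℂ, Xi D t' x = 0 → x.im = 0 :=
  stmt16_general F D t t' htt' h
end
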